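/- Let g be a nondegenerate symmetric bilinear form of Lorentzian signature (-,+,+,+) on ℝ⁴. If w is a symmetric bilinear form on ℝ⁴ with w(ξ, ξ) = 0 for every null vector ξ (i.e. every ξ with g(ξ, ξ) = 0), then w = c·g for some constant c ∈ ℝ. -/

import Mathlib

/-!
Transport `G` to the Minkowski matrix `η = diag(-1,1,1,1)` by the congruence `P`; the form
`Pᵀ W P` then vanishes on the `η`-null cone. Testing it on the null vectors `e₀ ± eᵢ` kills the
mixed time–space entries and forces `Wᵢᵢ = -W₀₀`; testing it on the null vectors
`5e₀ + 3eᵢ + 4eⱼ` then kills the space–space entries. Hence `Pᵀ W P = c η = c Pᵀ G P`, and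
cancelling the invertible `P` gives `W = c G`.
-/

open Matrix

/-- The Minkowski matrix diag(-1,1,1,1). -/
noncomputable def minkMat : Matrix (Fin 4) (Fin 4) ℝ :=
  Matrix.diagonal (fun i => if i = 0 then (-1 : ℝ) else 1)

namespace Matrix

section CommSemiring

variable {n R : Type*} [Fintype n] [CommSemiring R]

theorem single_dotProduct_mulVec_single [DecidableEq n] (M : Matrix n n R) (i j : n) (a b : R) :
    Pi.single i a ⬝ᵥ M *ᵥ Pi.single j b = a * M i j * b := by
  rw [single_dotProduct, mulVec, dotProduct_single, mul_assoc]

theorem dotProduct_transpose_mul_mul_mulVec (A B : Matrix n n R) (ξ : n → R) :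
    ξ ⬝ᵥ (Aᵀ * B * A) *ᵥ ξ = (A *ᵥ ξ) ⬝ᵥ B *ᵥ (A *ᵥ ξ) := by
  rw [← mulVec_mulVec, ← mulVec_mulVec, dotProduct_mulVec, vecMul_transpose]

theorem IsSymm.transpose_mul_mul {W : Matrix n n R} (hW : W.IsSymm) (P : Matrix n n R) :
    (Pᵀ * W * P).IsSymm := by
  rw [IsSymm, transpose_mul, transpose_mul, transpose_transpose, hW.eq, Matrix.mul_assoc]

def VanishesOnNullCone (W G : Matrix n n R) : Prop :=
  ∀ ξ : n → R, ξ ⬝ᵥ G *ᵥ ξ = 0 → ξ ⬝ᵥ W *ᵥ ξ = 0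

theorem VanishesOnNullCone.transpose_mul_mul {W G : Matrix n n R} (h : VanishesOnNullCone W G)
    (P : Matrix n n R) : VanishesOnNullCone (Pᵀ * W * P) (Pᵀ * G * P) := by
  intro ξ hξ
  rw [dotProduct_transpose_mul_mul_mulVec] at hξ ⊢
  exact h _ hξ

end CommSemiring

theorem eq_smul_of_transpose_mul_mul_eq_smul {n R : Type*} [Fintype n] [DecidableEq n] [CommRing R]
    {P W G : Matrix n n R} (hP : IsUnit P.det) {c : R}
    (h : Pᵀ * W * P = c • (Pᵀ * G * P)) : W = c • G := by
  have := P.invertibleOfIsUnitDet hP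
  rwa [← Matrix.smul_mul, ← Matrix.mul_smul, mul_left_inj_of_invertible,
    mul_right_inj_of_invertible] at h

end Matrix

section Minkowski

variable {ι : Type*} [DecidableEq ι] {t i j : ι}

noncomputable def minkowskiMatrix (t : ι) : Matrix ι ι ℝ :=
  diagonal fun i => if i = t then -1 else 1

@[simp]
theorem minkowskiMatrix_apply_time : minkowskiMatrix t t t = -1 := by
  simp [minkowskiMatrix]

theorem minkowskiMatrix_apply_self (hi : i ≠ t) : minkowskiMatrix t i i = 1 := by
  simp [minkowskiMatrix, hi]

theorem minkowskiMatrix_apply_ne (hij : i ≠ j) : minkowskiMatrix t i j = 0 :=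
  diagonal_apply_ne _ hij

variable [Fintype ι] {W : Matrix ι ι ℝ}

namespace Matrix.VanishesOnNullCone

variable (h : VanishesOnNullCone W (minkowskiMatrix t)) (hW : W.IsSymm)
include h hW

theorem apply_time_eq_zero_and_apply_self (hi : i ≠ t) : W t i = 0 ∧ W i i = -W t t := by
  have null_pair (s : ℝ) (hs : s * s = 1) : W t t + 2 * s * W t i + s * s * W i i = 0 := by
    have := h (Pi.single t 1 + Pi.single i s) (by
      simp only [add_dotProduct, dotProduct_add, mulVec_add, single_dotProduct_mulVec_single,
        minkowskiMatrix_apply_time, minkowskiMatrix_apply_self hi, minkowskiMatrix_apply_ne hi,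
        minkowskiMatrix_apply_ne hi.symm]
      linear_combination hs)
    simp only [add_dotProduct, dotProduct_add, mulVec_add, single_dotProduct_mulVec_single,
      hW.apply t i] at this
    linear_combination this
  have plus := null_pair 1 (by norm_num)
  have minus := null_pair (-1) (by norm_num)
  constructor <;> linarith

theorem apply_eq_zero_of_ne_time (hi : i ≠ t) (hj : j ≠ t) (hij : i ≠ j) : W i j = 0 := by
  obtain ⟨hti, hii⟩ := h.apply_time_eq_zero_and_apply_self hW hi
  obtain ⟨htj, hjj⟩ := h.apply_time_eq_zero_and_apply_self hW hj
  have := h (Pi.single t 5 + Pi.single i 3 + Pi.single j 4) (by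
    simp only [add_dotProduct, dotProduct_add, mulVec_add, single_dotProduct_mulVec_single,
      minkowskiMatrix_apply_time, minkowskiMatrix_apply_self hi, minkowskiMatrix_apply_self hj,
      minkowskiMatrix_apply_ne hi, minkowskiMatrix_apply_ne hi.symm, minkowskiMatrix_apply_ne hj,
      minkowskiMatrix_apply_ne hj.symm, minkowskiMatrix_apply_ne hij,
      minkowskiMatrix_apply_ne hij.symm]
    norm_num)
  simp only [add_dotProduct, dotProduct_add, mulVec_add, single_dotProduct_mulVec_single,
    hW.apply t i, hW.apply t j, hW.apply i j, hti, htj, hii, hjj] at this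
  linear_combination this / 24

theorem eq_smul_minkowskiMatrix : W = (-W t t) • minkowskiMatrix t := by
  ext i j
  rw [Matrix.smul_apply, smul_eq_mul]
  rcases eq_or_ne i j with rfl | hij
  · rcases eq_or_ne i t with rfl | hi
    · simp
    · rw [(h.apply_time_eq_zero_and_apply_self hW hi).2, minkowskiMatrix_apply_self hi, mul_one]
  · rw [minkowskiMatrix_apply_ne hij, mul_zero]
    rcases eq_or_ne i t with rfl | hi
    · exact (h.apply_time_eq_zero_and_apply_self hW hij.symm).1
    rcases eq_or_ne j t with rfl | hj
    · rw [hW.apply, (h.apply_time_eq_zero_and_apply_self hW hi).1]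
    · exact h.apply_eq_zero_of_ne_time hW hi hj hij

end Matrix.VanishesOnNullCone

end Minkowski

theorem minkMat_eq_minkowskiMatrix : minkMat = minkowskiMatrix 0 := rfl

theorem symmetric_null_form_is_multiple_general (G W : Matrix (Fin 4) (Fin 4) ℝ)
    (hGsig : ∃ P : Matrix (Fin 4) (Fin 4) ℝ, IsUnit P.det ∧ Pᵀ * G * P = minkMat)
    (hWsym : W.IsSymm)
    (hnull : ∀ ξ : Fin 4 → ℝ, ξ ⬝ᵥ G *ᵥ ξ = 0 → ξ ⬝ᵥ W *ᵥ ξ = 0) :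
    ∃ c : ℝ, W = c • G := by
  obtain ⟨P, hP, hPG⟩ := hGsig
  have hnull' := VanishesOnNullCone.transpose_mul_mul hnull P
  rw [hPG, minkMat_eq_minkowskiMatrix] at hnull'
  refine ⟨-(Pᵀ * W * P) 0 0, eq_smul_of_transpose_mul_mul_eq_smul hP ?_⟩
  rw [hPG, minkMat_eq_minkowskiMatrix]
  exact hnull'.eq_smul_minkowskiMatrix (hWsym.transpose_mul_mul P)

/-- A symmetric bilinear form on ℝ⁴ vanishing on the light cone of a
Lorentzian metric g is a constant multiple of g. -/
theorem symmetric_null_form_is_multiple (G W : Matrix (Fin 4) (Fin 4) ℝ)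
    (hGsym : G.IsSymm)
    (hGsig : ∃ P : Matrix (Fin 4) (Fin 4) ℝ, IsUnit P.det ∧ Pᵀ * G * P = minkMat)
    (hWsym : W.IsSymm)
    (hnull : ∀ ξ : Fin 4 → ℝ, ξ ⬝ᵥ G *ᵥ ξ = 0 → ξ ⬝ᵥ W *ᵥ ξ = 0) :
    ∃ c : ℝ, W = c • G :=
  symmetric_null_form_is_multiple_general G W hGsig hWsym hnull
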